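/- Let A be an n×n real matrix, B an n×m real matrix, τ > 0, and suppose the controllability Gramian G_τ = ∫₀^τ e^{A s} B Bᵀ e^{Aᵀ s} ds is invertible. Then for every x_f ∈ ℝⁿ and every square-integrable input u : [0, τ] → ℝᵐ with ∫₀^τ e^{A(τ−s)} B u(s) ds = x_f, the control energy satisfies ∫₀^τ (1/2) ‖u(s)‖² ds ≥ (1/2) x_fᵀ G_τ⁻¹ x_f. -/

import Mathlib

/-!
With `w := G_τ⁻¹ x_f` and `v(s) := Bᵀ e^{Aᵀ(τ-s)} w`, the reachability constraint gives
`⟨u, v⟩_{L²} = x_f ⬝ w`, and the definition of the Gramian gives `‖v‖² = w ⬝ G_τ w = x_f ⬝ w`.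
Expanding `0 ≤ ‖u - v‖²` yields `‖u‖² ≥ 2 ⟨u, v⟩ - ‖v‖² = x_fᵀ G_τ⁻¹ x_f`.
-/

open MeasureTheory Matrix NormedSpace

attribute [local instance] Matrix.normedAddCommGroup Matrix.normedSpace

-- The normed-group instance above induces the product topology on matrices only up to unfolding,
-- so instance search cannot derive this one from it.
instance {m n : Type*} [Fintype m] [Fintype n] : ContinuousENorm (Matrix m n ℝ) :=
  inferInstanceAs (ContinuousENorm (m → n → ℝ))

namespace MeasureTheory

variable {α ι κ : Type*} [MeasurableSpace α] {μ : Measure α} [Fintype ι] [Fintype κ]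

theorem MemLp.integrable_dotProduct {f g : α → ι → ℝ} (hf : MemLp f 2 μ)
    (hg : MemLp g 2 μ) : Integrable (fun s => f s ⬝ᵥ g s) μ :=
  integrable_finsetSum _ fun i _ => (hf.eval i).integrable_mul (hg.eval i)

theorem integral_dotProduct_const {g : α → ι → ℝ} (hg : Integrable g μ)
    (w : ι → ℝ) : ∫ s, g s ⬝ᵥ w ∂μ = (∫ s, g s ∂μ) ⬝ᵥ w := by
  simp only [dotProduct, integral_finsetSum _ fun i _ => (hg.eval i).mul_const (w i),
    integral_mul_const, eval_integral hg.eval]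

theorem two_mul_integral_dotProduct_sub_le {u v : α → ι → ℝ} (hu : MemLp u 2 μ)
    (hv : MemLp v 2 μ) :
    2 * ∫ s, u s ⬝ᵥ v s ∂μ - ∫ s, v s ⬝ᵥ v s ∂μ ≤ ∫ s, u s ⬝ᵥ u s ∂μ := by
  have hexpand : ∀ s, (u s - v s) ⬝ᵥ (u s - v s)
      = u s ⬝ᵥ u s - 2 * (u s ⬝ᵥ v s) + v s ⬝ᵥ v s := fun s => by
    simp only [sub_dotProduct, dotProduct_sub, dotProduct_comm (v s) (u s)]
    ring
  have hsq : 0 ≤ ∫ s, (u s - v s) ⬝ᵥ (u s - v s) ∂μ :=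
    integral_nonneg fun s => by simpa using dotProduct_self_star_nonneg (u s - v s)
  have huu := hu.integrable_dotProduct hu
  have huv := (hu.integrable_dotProduct hv).const_mul 2
  have huu_sub_huv : Integrable (fun s => u s ⬝ᵥ u s - 2 * (u s ⬝ᵥ v s)) μ := huu.sub huv
  rw [integral_congr_ae (ae_of_all _ hexpand), integral_add huu_sub_huv
    (hv.integrable_dotProduct hv), integral_sub huu huv, integral_const_mul] at hsq
  linarith

theorem memLp_vecMul {M : α → Matrix κ ι ℝ} (hM : ∀ i, MemLp (fun s => M s i) 2 μ)
    (w : κ → ℝ) : MemLp (fun s => w ᵥ* M s) 2 μ := by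
  simp only [vecMul_eq_sum]
  exact memLp_finsetSum _ fun i _ => (hM i).const_smul (w i)

theorem integrable_mul_transpose {M : α → Matrix κ ι ℝ} (hM : ∀ i, MemLp (fun s => M s i) 2 μ) :
    Integrable (fun s => M s * (M s)ᵀ) μ :=
  Integrable.of_eval fun i => Integrable.of_eval fun j => by
    simpa only [mul_apply', transpose_apply] using (hM i).integrable_dotProduct (hM j)

theorem integral_dotProduct_mulVec {N : α → Matrix κ ι ℝ} (hN : Integrable N μ) (v : κ → ℝ)
    (w : ι → ℝ) : ∫ s, v ⬝ᵥ N s *ᵥ w ∂μ = v ⬝ᵥ (∫ s, N s ∂μ) *ᵥ w :=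
  let bilin : Matrix κ ι ℝ →ₗ[ℝ] ℝ :=
    { toFun := fun N => v ⬝ᵥ N *ᵥ w
      map_add' := fun _ _ => by simp only [add_mulVec, dotProduct_add]
      map_smul' := fun _ _ => by
        simp only [smul_mulVec, dotProduct_smul, RingHom.id_apply] }
  bilin.toContinuousLinearMap.integral_comp_comm hN

theorem two_mul_integral_mulVec_dotProduct_sub_gramian_le {M : α → Matrix κ ι ℝ}
    (hM : ∀ i, MemLp (fun s => M s i) 2 μ) {u : α → ι → ℝ} (hu : MemLp u 2 μ) (w : κ → ℝ) :
    2 * ((∫ s, M s *ᵥ u s ∂μ) ⬝ᵥ w) - w ⬝ᵥ (∫ s, M s * (M s)ᵀ ∂μ) *ᵥ w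
      ≤ ∫ s, u s ⬝ᵥ u s ∂μ := by
  have hv := memLp_vecMul hM w
  have hMu : Integrable (fun s => M s *ᵥ u s) μ :=
    Integrable.of_eval fun i => (hM i).integrable_dotProduct hu
  have hcross : ∫ s, u s ⬝ᵥ w ᵥ* M s ∂μ = (∫ s, M s *ᵥ u s ∂μ) ⬝ᵥ w := by
    rw [← integral_dotProduct_const hMu]
    congr with s
    rw [dotProduct_comm, ← dotProduct_mulVec, dotProduct_comm]
  have hgram : ∫ s, w ᵥ* M s ⬝ᵥ w ᵥ* M s ∂μ = w ⬝ᵥ (∫ s, M s * (M s)ᵀ ∂μ) *ᵥ w := by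
    rw [← integral_dotProduct_mulVec (integrable_mul_transpose hM)]
    congr with s
    rw [← mulVec_mulVec, mulVec_transpose, dotProduct_mulVec]
  simpa only [hcross, hgram] using two_mul_integral_dotProduct_sub_le hu hv

end MeasureTheory

theorem ContinuousOn.memLp_restrict_of_isCompact {X E : Type*} [TopologicalSpace X]
    [MeasurableSpace X] [OpensMeasurableSpace X] [T2Space X] {μ : Measure X}
    [IsFiniteMeasureOnCompacts μ] [NormedAddCommGroup E] [SecondCountableTopologyEither X E]
    {f : X → E} {K : Set X}
    (hK : IsCompact K) (hf : ContinuousOn f K) (p : ENNReal) : MemLp f p (μ.restrict K) := by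
  obtain ⟨C, hC⟩ := hK.exists_bound_of_continuousOn hf
  have : IsFiniteMeasure (μ.restrict K) := isFiniteMeasure_restrict.2 hK.measure_lt_top.ne
  exact .of_bound (hf.aestronglyMeasurable hK.measurableSet) C
    ((ae_restrict_iff' hK.measurableSet).2 (ae_of_all _ hC))

-- Every matrix norm induces the same topology, so the operator norm may be used to get a
-- normed algebra here.
attribute [local instance] Matrix.linftyOpNormedAddCommGroup Matrix.linftyOpNormedSpace
  Matrix.linftyOpNormedRing Matrix.linftyOpNormedAlgebra in
theorem Matrix.continuous_exp_smul {ι : Type*} [Fintype ι] [DecidableEq ι] (A : Matrix ι ι ℝ) :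
    Continuous fun s : ℝ => exp (s • A) :=
  have : CompleteSpace (Matrix ι ι ℝ) := FiniteDimensional.complete ℝ _
  exp_continuous.comp (continuous_id.smul continuous_const)

section Gramian

variable {ι κ : Type*} [Fintype ι] [DecidableEq ι] [Fintype κ]

noncomputable def controllabilityGramian (A : Matrix ι ι ℝ) (B : Matrix ι κ ℝ) (τ : ℝ) :
    Matrix ι ι ℝ :=
  ∫ s in (0 : ℝ)..τ, exp (s • A) * B * Bᵀ * exp (s • Aᵀ)

theorem controllabilityGramian_eq_setIntegral (A : Matrix ι ι ℝ) (B : Matrix ι κ ℝ) {τ : ℝ}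
    (hτ : 0 ≤ τ) : controllabilityGramian A B τ
      = ∫ s in Set.Ioc 0 τ, exp ((τ - s) • A) * B * (exp ((τ - s) • A) * B)ᵀ := by
  have htranspose : ∀ t : ℝ, exp (t • A) * B * (exp (t • A) * B)ᵀ
      = exp (t • A) * B * Bᵀ * exp (t • Aᵀ) := fun t => by
    simp only [transpose_mul, ← exp_transpose, transpose_smul, Matrix.mul_assoc]
  simp only [htranspose, ← intervalIntegral.integral_of_le hτ]
  simpa only [controllabilityGramian, sub_self, sub_zero] using
    (intervalIntegral.integral_comp_sub_left (fun t => exp (t • A) * B * Bᵀ * exp (t • Aᵀ)) τ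
      (a := 0) (b := τ)).symm

end Gramian

/-- If the controllability Gramian `G_τ` is invertible, then every
square-integrable input steering the origin to `x_f` at time `τ` has control energy at
least `(1/2) x_fᵀ G_τ⁻¹ x_f`. -/
theorem energy_lower_bound_via_gramian
    {n m : ℕ} (A : Matrix (Fin n) (Fin n) ℝ) (B : Matrix (Fin n) (Fin m) ℝ)
    (τ : ℝ) (hτ : 0 < τ)
    (Gτ : Matrix (Fin n) (Fin n) ℝ)
    (hGτ : Gτ = ∫ s in (0:ℝ)..τ, exp (s • A) * B * Bᵀ * exp (s • Aᵀ))
    (hinv : IsUnit Gτ.det) :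
    ∀ xf : Fin n → ℝ, ∀ u : ℝ → Fin m → ℝ,
      MemLp u 2 (volume.restrict (Set.Ioc 0 τ)) →
      (∫ s in (0:ℝ)..τ, (exp ((τ - s) • A)).mulVec (B.mulVec (u s))) = xf →
      (1 / 2) * (xf ⬝ᵥ Gτ⁻¹.mulVec xf) ≤ ∫ s in (0:ℝ)..τ, (1 / 2) * (u s ⬝ᵥ u s) := by
  intro xf u hu hreach
  set M : ℝ → Matrix (Fin n) (Fin m) ℝ := fun s => exp ((τ - s) • A) * B
  have hMcont : Continuous M :=
    ((continuous_exp_smul A).comp (continuous_const.sub continuous_id)).matrix_mul continuous_const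
  have hM : ∀ i, MemLp (fun s => M s i) 2 (volume.restrict (Set.Ioc 0 τ)) :=
    (hMcont.continuousOn.memLp_restrict_of_isCompact isCompact_Icc 2).mono_measure
      (Measure.restrict_mono Set.Ioc_subset_Icc_self le_rfl) |>.eval
  have hxf : ∫ s in Set.Ioc 0 τ, M s *ᵥ u s = xf := by
    simp only [← hreach, intervalIntegral.integral_of_le hτ.le, M, mulVec_mulVec]
  have hG : ∫ s in Set.Ioc 0 τ, M s * (M s)ᵀ = Gτ :=
    hGτ ▸ (controllabilityGramian_eq_setIntegral A B hτ.le).symm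
  have hGw : Gτ *ᵥ Gτ⁻¹ *ᵥ xf = xf := by
    rw [mulVec_mulVec, mul_nonsing_inv _ hinv, one_mulVec]
  have key := two_mul_integral_mulVec_dotProduct_sub_gramian_le hM hu (Gτ⁻¹ *ᵥ xf)
  rw [hxf, hG, hGw, dotProduct_comm (Gτ⁻¹ *ᵥ xf)] at key
  rw [intervalIntegral.integral_of_le hτ.le, integral_const_mul]
  linarith
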